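/- For λ = 1, μ = 1, F(ψ) = k/sin²(ψ + ψ₀), G(ψ) = cos(ψ + ψ₀), the function I₁ = p_r G(ψ) + (1/r) p_ψ G'(ψ) = p_r cos(ψ+ψ₀) − (1/r) p_ψ sin(ψ+ψ₀) satisfies {H, I₁} = 0 for H = ½p_r² + (1/r²)(½p_ψ² + F(ψ)). -/

import Mathlib

open Real

/- Phase space coordinates: `x 0 = r`, `x 1 = ψ`, `x 2 = p_r`, `x 3 = p_ψ`. -/

/-- Partial derivative with respect to the `i`-th coordinate. -/
noncomputable def pd (i : Fin 4) (f : (Fin 4 → ℝ) → ℝ) (x : Fin 4 → ℝ) : ℝ :=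
  deriv (fun t => f (Function.update x i t)) (x i)

/-- The angular Hamiltonian `L = ½ p_ψ² + F(ψ)`. -/
noncomputable def Lfun (F : ℝ → ℝ) (x : Fin 4 → ℝ) : ℝ :=
  (1/2) * (x 3)^2 + F (x 1)

/-- The Hamiltonian vector field `X_L = p_ψ ∂/∂ψ − F'(ψ) ∂/∂p_ψ` as an operator. -/
noncomputable def XL (F : ℝ → ℝ) (f : (Fin 4 → ℝ) → ℝ) (x : Fin 4 → ℝ) : ℝ :=
  x 3 * pd 1 f x - deriv F (x 1) * pd 3 f x

/-- The Hamiltonian `H = ½ p_r² + (½ p_ψ² + F(ψ))/r²`. -/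
noncomputable def Hfun (F : ℝ → ℝ) (x : Fin 4 → ℝ) : ℝ :=
  (1/2) * (x 2)^2 + (1 / (x 0)^2) * ((1/2) * (x 3)^2 + F (x 1))

/-- Standard Poisson bracket on the phase space `(r, ψ, p_r, p_ψ)`. -/
noncomputable def poisson (f g : (Fin 4 → ℝ) → ℝ) (x : Fin 4 → ℝ) : ℝ :=
  (pd 0 f x * pd 2 g x - pd 2 f x * pd 0 g x) +
  (pd 1 f x * pd 3 g x - pd 3 f x * pd 1 g x)

/-- For `λ = μ = 1`, `F(ψ) = k/sin²(ψ+ψ₀)` and `G(ψ) = cos(ψ+ψ₀)`, the function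
`I₁ = p_r cos(ψ+ψ₀) − (p_ψ/r) sin(ψ+ψ₀)` satisfies `{H, I₁} = 0`. -/
theorem first_integral_lambda_one (k ψ₀ : ℝ) (x : Fin 4 → ℝ)
    (hr : 0 < x 0) (hs : sin (x 1 + ψ₀) ≠ 0) :
    poisson (Hfun (fun ψ => k / (sin (ψ + ψ₀))^2))
      (fun y => y 2 * cos (y 1 + ψ₀) - (y 3 / y 0) * sin (y 1 + ψ₀)) x = 0 := by
  have hr0 : x 0 ≠ 0 := hr.ne'
  set r := x 0 with hrdef
  set s := sin (x 1 + ψ₀) with hsdef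
  set c := cos (x 1 + ψ₀) with hcdef
  set pr := x 2 with hprdef
  set pp := x 3 with hppdef
  set F : ℝ → ℝ := fun ψ => k / (sin (ψ + ψ₀))^2 with hF
  set g : (Fin 4 → ℝ) → ℝ := fun y => y 2 * cos (y 1 + ψ₀) - (y 3 / y 0) * sin (y 1 + ψ₀) with hg
  have hsin : HasDerivAt (fun t : ℝ => sin (t + ψ₀)) c (x 1) := by
    simpa [hcdef] using ((hasDerivAt_id (x 1)).add_const ψ₀).sin
  have hcos : HasDerivAt (fun t : ℝ => cos (t + ψ₀)) (-s) (x 1) := by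
    simpa [hsdef] using ((hasDerivAt_id (x 1)).add_const ψ₀).cos
  -- pd 0 H
  have h0H : pd 0 (Hfun F) x = -(2 * r) / (r^2)^2 * ((1/2) * pp^2 + F (x 1)) := by
    have he : (fun t => Hfun F (Function.update x 0 t))
        = fun t => (1/2) * pr^2 + (t^2)⁻¹ * ((1/2) * pp^2 + F (x 1)) := by
      funext t; simp [Hfun, Function.update, one_div, hprdef, hppdef]
    rw [pd, he]
    have h1 : HasDerivAt (fun t : ℝ => t^2) (2*r) r := by simpa using hasDerivAt_pow 2 r
    exact (((h1.inv (pow_ne_zero 2 hr0)).mul_const _).const_add _).deriv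
  -- pd 1 H
  have h1H : pd 1 (Hfun F) x = (r^2)⁻¹ * (k * (-(2 * s * c) / (s^2)^2)) := by
    have he : (fun t => Hfun F (Function.update x 1 t))
        = fun t => ((1/2) * pr^2 + (r^2)⁻¹ * ((1/2) * pp^2)) +
            (r^2)⁻¹ * (k * ((sin (t + ψ₀))^2)⁻¹) := by
      funext t; simp [Hfun, Function.update, hF, one_div, div_eq_mul_inv]; ring
    rw [pd, he]
    have h1 : HasDerivAt (fun t : ℝ => (sin (t + ψ₀))^2) (2 * s * c) (x 1) := by
      simpa [hsdef, mul_comm, mul_assoc, mul_left_comm] using hsin.fun_pow 2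
    exact ((((h1.inv (pow_ne_zero 2 hs)).const_mul k).const_mul _).const_add _).deriv
  -- pd 2 H
  have h2H : pd 2 (Hfun F) x = pr := by
    have he : (fun t => Hfun F (Function.update x 2 t))
        = fun t => (1/2) * t^2 + (r^2)⁻¹ * ((1/2) * pp^2 + F (x 1)) := by
      funext t; simp [Hfun, Function.update, one_div, hrdef, hppdef]
    rw [pd, he]
    have h1 : HasDerivAt (fun t : ℝ => (1/2) * t^2) pr pr := by
      simpa [hprdef] using (hasDerivAt_pow 2 pr).const_mul (1/2 : ℝ)
    simpa [hprdef] using (h1.add_const _).deriv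
  -- pd 3 H
  have h3H : pd 3 (Hfun F) x = (r^2)⁻¹ * pp := by
    have he : (fun t => Hfun F (Function.update x 3 t))
        = fun t => ((1/2) * pr^2 + (r^2)⁻¹ * (F (x 1))) + (r^2)⁻¹ * ((1/2) * t^2) := by
      funext t; simp [Hfun, Function.update, one_div]; ring
    rw [pd, he]
    have h1 : HasDerivAt (fun t : ℝ => (1/2) * t^2) pp pp := by
      simpa using (hasDerivAt_pow 2 pp).const_mul (1/2 : ℝ)
    simpa [hppdef] using ((h1.const_mul ((r^2)⁻¹)).const_add ((1/2) * pr^2 + (r^2)⁻¹ * (F (x 1)))).deriv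
  -- pd 0 g
  have h0g : pd 0 g x = pp * s / r^2 := by
    have he : (fun t => g (Function.update x 0 t))
        = fun t => pr * c - (pp * s) * t⁻¹ := by
      funext t; simp [hg, Function.update, div_eq_mul_inv]; ring
    rw [pd, he]
    have h1 := ((hasDerivAt_inv hr0).const_mul (pp * s)).const_sub (pr * c)
    rw [h1.deriv]; field_simp
  -- pd 1 g
  have h1g : pd 1 g x = pr * (-s) - (pp / r) * c := by
    have he : (fun t => g (Function.update x 1 t))
        = fun t => pr * cos (t + ψ₀) - (pp / r) * sin (t + ψ₀) := by
      funext t; simp [hg, Function.update, hprdef, hppdef, hrdef]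
    rw [pd, he]
    exact ((hcos.const_mul pr).sub (hsin.const_mul (pp / r))).deriv
  -- pd 2 g
  have h2g : pd 2 g x = c := by
    have he : (fun t => g (Function.update x 2 t)) = fun t => t * c - (pp / r) * s := by
      funext t; simp [hg, Function.update, hcdef, hsdef, hppdef, hrdef]
    rw [pd, he]
    simpa using (((hasDerivAt_id pr).mul_const c).sub_const _).deriv
  -- pd 3 g
  have h3g : pd 3 g x = -(s / r) := by
    have he : (fun t => g (Function.update x 3 t)) = fun t => pr * c - (s / r) * t := by
      funext t; simp [hg, Function.update]; ring
    rw [pd, he]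
    simpa using (((hasDerivAt_id pp).const_mul (s/r)).const_sub (pr * c)).deriv
  rw [poisson, h0H, h1H, h2H, h3H, h0g, h1g, h2g, h3g, hF]
  simp only [← hsdef]
  field_simp
  ring
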